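/- arXiv:1004.0424 — 7 statements merged into one kernel-verified Lean document; each statement's English description precedes it below -/
import Mathlib

section
/- Let G = (V,E) be an undirected graph with V = {v_1,...,v_n}, let t be the multiset containing exactly n copies of each symbol v_i, and for each i let s_i = v_i^n · d(v_i), where d(v_i) is a fixed ordering of the vertices not adjacent to v_i. If v_i ≠ v_j are non-adjacent in G, then any common superstring of s_i and s_j must contain at least n+1 occurrences of v_i or at least n+1 occurrences of v_j; consequently no permutation of t contains both s_i and s_j as substrings. -/
private lemma drop_count_zero {α} [DecidableEq α] {u a r : List α} {x : α} {n : ℕ}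
    (h : u = a ++ (List.replicate n x ++ r)) (hc : u.count x ≤ n) :
    (u.drop (a.length + n)).count x = 0 := by
  subst h
  have hd : (a ++ (List.replicate n x ++ r)).drop (a.length + n) = r := by
    rw [← List.append_assoc]
    have : a.length + n = (a ++ List.replicate n x).length := by simp
    rw [this, List.drop_left]
  rw [hd]
  simp [List.count_append] at hc
  omega

/-- Clique reduction, non-adjacent case: with `t` containing `n` copies of each
vertex symbol and `s_i = v_i^n · d(v_i)` where `d(v_i)` lists the vertices not
adjacent to `v_i`, if `v_i ≠ v_j` are non-adjacent then any common superstring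
of `s_i` and `s_j` has at least `n+1` occurrences of `v_i` or of `v_j`; hence
no permutation of `t` contains both `s_i` and `s_j` as substrings. -/
theorem stmt_3 {n : ℕ} (G : SimpleGraph (Fin n)) (d : Fin n → List (Fin n))
    (hdnodup : ∀ v, (d v).Nodup)
    (hd : ∀ v w, w ∈ d v ↔ w ≠ v ∧ ¬ G.Adj v w)
    (i j : Fin n) (hij : i ≠ j) (hadj : ¬ G.Adj i j) :
    (∀ u : List (Fin n),
        (List.replicate n i ++ d i) <:+: u →
        (List.replicate n j ++ d j) <:+: u →
        n + 1 ≤ u.count i ∨ n + 1 ≤ u.count j) ∧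
    (∀ l : List (Fin n), (∀ v, l.count v = n) →
        ¬ ((List.replicate n i ++ d i) <:+: l ∧
           (List.replicate n j ++ d j) <:+: l)) := by
  have hji : j ∈ d i := (hd i j).mpr ⟨hij.symm, hadj⟩
  have hijm : i ∈ d j := (hd j i).mpr ⟨hij, fun h => hadj h.symm⟩
  have main : ∀ u : List (Fin n),
      (List.replicate n i ++ d i) <:+: u →
      (List.replicate n j ++ d j) <:+: u →
      n + 1 ≤ u.count i ∨ n + 1 ≤ u.count j := by
    intro u h1 h2
    by_contra hcon
    push_neg at hcon
    obtain ⟨hci, hcj⟩ := hcon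
    have hci : u.count i ≤ n := by omega
    have hcj : u.count j ≤ n := by omega
    obtain ⟨a, b, hab⟩ := h1
    obtain ⟨c, e, hce⟩ := h2
    have hua : u = a ++ (List.replicate n i ++ (d i ++ b)) := by
      rw [← hab]; simp
    have huc : u = c ++ (List.replicate n j ++ (d j ++ e)) := by
      rw [← hce]; simp
    have hzi : (u.drop (a.length + n)).count i = 0 := drop_count_zero hua hci
    have hzj : (u.drop (c.length + n)).count j = 0 := drop_count_zero huc hcj
    -- drop (a.length + n) u = d i ++ b contains j; drop (c.length+n) u = d j ++ e contains i
    have hdi : u.drop (a.length + n) = d i ++ b := by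
      rw [hua, ← List.append_assoc, ← List.append_assoc]
      have : a.length + n = (a ++ List.replicate n i).length := by simp
      rw [this, List.append_assoc (a ++ List.replicate n i), List.drop_left]
    have hdj : u.drop (c.length + n) = d j ++ e := by
      rw [huc, ← List.append_assoc, ← List.append_assoc]
      have : c.length + n = (c ++ List.replicate n j).length := by simp
      rw [this, List.append_assoc (c ++ List.replicate n j), List.drop_left]
    rcases le_total a.length c.length with hle | hle
    · -- drop (c.length + n) u is a suffix of drop (a.length + n) u, contains i
      have h1 : 1 ≤ (u.drop (c.length + n)).count i := by
        rw [hdj]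
        have : i ∈ d j ++ e := List.mem_append_left _ hijm
        exact List.count_pos_iff.mpr this
      have h2 : (u.drop (c.length + n)).count i ≤ (u.drop (a.length + n)).count i := by
        have : u.drop (c.length + n) = (u.drop (a.length + n)).drop (c.length + n - (a.length + n)) := by
          rw [List.drop_drop]; congr 1; omega
        rw [this]
        exact (List.drop_sublist _ _).count_le i
      omega
    · have h1 : 1 ≤ (u.drop (a.length + n)).count j := by
        rw [hdi]
        have : j ∈ d i ++ b := List.mem_append_left _ hji
        exact List.count_pos_iff.mpr this
      have h2 : (u.drop (a.length + n)).count j ≤ (u.drop (c.length + n)).count j := by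
        have : u.drop (a.length + n) = (u.drop (c.length + n)).drop (a.length + n - (c.length + n)) := by
          rw [List.drop_drop]; congr 1; omega
        rw [this]
        exact (List.drop_sublist _ _).count_le j
      omega
  refine ⟨main, ?_⟩
  intro l hl ⟨h1, h2⟩
  rcases main l h1 h2 with h | h
  · rw [hl i] at h; omega
  · rw [hl j] at h; omega
end

section
/- With the same construction as above (t = n copies of each vertex symbol, s_i = v_i^n · d(v_i)): if A' = {v_1,...,v_k} is a clique in G, then there exists a permutation π(t) of t such that every string s_1,...,s_k is a substring of π(t). Conversely, if some permutation of t contains strings s_{i_1},...,s_{i_k} as substrings, then {v_{i_1},...,v_{i_k}} is a clique in G. -/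
/-!
If `A` is a clique, concatenating the strings `s_i` (`i ∈ A`) uses every vertex at most `n`
times: `w ∈ A` occurs only in the block `w^n` of `s_w`, since it is adjacent to all other
members, and `w ∉ A` occurs at most once in each `d i`, hence at most `|A| ≤ n` times. Padding
with the missing copies gives a permutation of `t`.

Conversely, in a permutation of `t` the block `i^n` of an occurrence of `s_i` holds every copy
of `i`, so no `i` occurs after it. If `i ≠ j` were non-adjacent, then `j ∈ d i` and `i ∈ d j`,
and of the two occurrences of `s_i` and `s_j` the one starting later would place a forbidden
letter after the other one's block.
-/

open List

namespace List

variable {α : Type*} [DecidableEq α]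

lemma count_flatMap_toList {ι : Type*} (s : Finset ι) (f : ι → List α) (a : α) :
    (s.toList.flatMap f).count a = ∑ i ∈ s, (f i).count a := by
  rw [count_flatMap, ← Finset.sum_map_toList]
  rfl

lemma exists_count_append_eq [Fintype α] {n : ℕ} (l : List α) (h : ∀ a, l.count a ≤ n) :
    ∃ l', ∀ a, (l ++ l').count a = n := by
  refine ⟨Finset.univ.toList.flatMap fun b => replicate (n - l.count b) b, fun a => ?_⟩
  rw [count_append, count_flatMap_toList]
  simp only [count_replicate, beq_iff_eq, Finset.sum_ite_eq', Finset.mem_univ, if_true]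
  have := h a
  omega

lemma notMem_of_append_replicate_count_append {l u x u' y : List α} {a : α} {n : ℕ}
    (hcount : l.count a = n) (hblock : u ++ replicate n a ++ x = l) (hy : u' ++ y = l)
    (hle : u.length + n ≤ u'.length) : a ∉ y := by
  have hx : a ∉ x := by
    have := congrArg (count a) hblock
    rw [count_append, count_append, count_replicate_self, hcount] at this
    exact count_eq_zero.1 (by omega)
  have hdrop_x : l.drop (u.length + n) = x := by
    rw [← hblock, drop_left' (by simp)]
  have hdrop_y : l.drop u'.length = y := by
    rw [← hy, drop_left' rfl]
  have hyx : y.Sublist x := hdrop_y ▸ hdrop_x ▸ drop_sublist_drop_left l hle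
  exact fun ha => hx (hyx.subset ha)

end List

section CliqueReduction

variable {n : ℕ} {G : SimpleGraph (Fin n)} {d : Fin n → List (Fin n)}

lemma count_flatMap_le_of_isClique (hd : ∀ v w, w ∈ d v ↔ w ≠ v ∧ ¬ G.Adj v w)
    (hdnodup : ∀ v, (d v).Nodup) {A : Finset (Fin n)} (hA : G.IsClique (A : Set (Fin n)))
    (w : Fin n) : (A.toList.flatMap fun i => replicate n i ++ d i).count w ≤ n := by
  rw [count_flatMap_toList]
  by_cases hw : w ∈ A
  · refine (Finset.sum_eq_single_of_mem w hw fun i hi hiw => ?_).trans_le ?_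
    · have : w ∉ d i := fun h => ((hd i w).1 h).2 (hA hi hw hiw)
      simp [count_replicate, hiw, count_eq_zero.2 this]
    · simp [count_eq_zero.2 fun h => ((hd w w).1 h).1 rfl]
  · calc ∑ i ∈ A, (replicate n i ++ d i).count w
        ≤ A.card • 1 := Finset.sum_le_card_nsmul _ _ _ fun i hi => ?_
      _ ≤ n := by simpa using A.card_le_univ
    have hiw : i ≠ w := fun h => hw (h ▸ hi)
    rw [count_append, count_replicate, if_neg (by simpa using hiw), (hdnodup i).count]
    split_ifs <;> simp

lemma adj_of_infix_of_length_le (hd : ∀ v w, w ∈ d v ↔ w ≠ v ∧ ¬ G.Adj v w)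
    {l u v u' v' : List (Fin n)} {i j : Fin n} (hcount : l.count i = n)
    (hi : u ++ (replicate n i ++ d i) ++ v = l) (hj : u' ++ (replicate n j ++ d j) ++ v' = l)
    (hle : u.length ≤ u'.length) (hne : i ≠ j) : G.Adj j i := by
  by_contra hadj
  have hij : i ∈ d j := (hd j i).2 ⟨hne, hadj⟩
  exact notMem_of_append_replicate_count_append (u' := u' ++ replicate n j) (y := d j ++ v')
    hcount (by simpa only [append_assoc] using hi) (by simpa only [append_assoc] using hj)
    (by simpa using hle) (mem_append_left _ hij)

end CliqueReduction

/-- Clique reduction, correctness: with `t` containing `n` copies of each vertex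
symbol and `s_i = v_i^n · d(v_i)`, a set `A` of vertices is a clique iff some
permutation of `t` contains all the corresponding strings as substrings. -/
theorem stmt_4 {n : ℕ} (G : SimpleGraph (Fin n)) (d : Fin n → List (Fin n))
    (hdnodup : ∀ v, (d v).Nodup)
    (hd : ∀ v w, w ∈ d v ↔ w ≠ v ∧ ¬ G.Adj v w)
    (A : Finset (Fin n)) :
    (G.IsClique (A : Set (Fin n)) →
      ∃ l : List (Fin n), (∀ v, l.count v = n) ∧
        ∀ i ∈ A, (List.replicate n i ++ d i) <:+: l) ∧
    (∀ l : List (Fin n), (∀ v, l.count v = n) →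
      (∀ i ∈ A, (List.replicate n i ++ d i) <:+: l) →
      G.IsClique (A : Set (Fin n))) := by
  refine ⟨fun hA => ?_, fun l hl hinfix => ?_⟩
  · obtain ⟨pad, hpad⟩ := exists_count_append_eq _ (count_flatMap_le_of_isClique hd hdnodup hA)
    refine ⟨_, hpad, fun i hi => ?_⟩
    exact (infix_flatMap_of_mem (Finset.mem_toList.2 hi) fun i => replicate n i ++ d i).trans
      (prefix_append _ pad).isInfix
  · intro i hi j hj hne
    obtain ⟨u, v, hu⟩ := hinfix i hi
    obtain ⟨u', v', hu'⟩ := hinfix j hj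
    rcases le_total u.length u'.length with hle | hle
    · exact (adj_of_infix_of_length_le hd (hl i) hu hu' hle hne).symm
    · exact adj_of_infix_of_length_le hd (hl j) hu' hu hle hne.symm
end

section
/- Let G = (V,E) be a complete directed graph with edge weights in {0,1}, let t = V (each vertex appearing once), and let S = { ab : arc (a,b) has weight 1 }. If G has a Hamiltonian tour of total weight n = |V|, then there exists a permutation π(t) of t such that exactly n−1 strings of S are substrings of π(t). Conversely, any permutation of t contains at most k strings of S as substrings, where k is at most the maximum weight of a Hamiltonian tour in G; in particular, if every tour has weight less than (1−α)n, then every permutation of t contains fewer than (1−α)n strings of S as substrings. -/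
/-- Cyclic weight of a tour `f 0, f 1, …, f (n-1), f 0` in a complete weighted
digraph on `Fin n`. -/
def tourWeight (n : ℕ) [NeZero n] (w : Fin n → Fin n → ℕ)
    (f : Fin n → Fin n) : ℕ :=
  ∑ i : Fin n, w (f i) (f (i + 1))

/-- Number of weight-1 arcs along the open path `f 0, f 1, …, f (n-1)`
(equivalently, the number of strings `ab` with weight-1 arc `(a,b)` occurring
as substrings of the permutation). -/
def pathWeight (n : ℕ) [NeZero n] (w : Fin n → Fin n → ℕ)
    (f : Fin n → Fin n) : ℕ :=
  ∑ i : Fin n, if (i : ℕ) + 1 < n then w (f i) (f (i + 1)) else 0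

/-- Max-ATSP reduction: if the complete digraph on `n` vertices with 0/1 arc
weights has a Hamiltonian tour of weight `n`, then some permutation of the
vertices contains exactly `n−1` of the weight-1 strings as substrings; and if
every tour has weight less than `(1−α)n`, then every permutation contains
fewer than `(1−α)n` such strings as substrings. -/
theorem stmt_5 (n : ℕ) [NeZero n] (w : Fin n → Fin n → ℕ)
    (hw : ∀ a b, w a b ≤ 1) :
    ((∃ σ : Equiv.Perm (Fin n), tourWeight n w σ = n) →
      ∃ σ : Equiv.Perm (Fin n), pathWeight n w σ = n - 1) ∧
    (∀ α : ℝ,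
      (∀ σ : Equiv.Perm (Fin n), (tourWeight n w σ : ℝ) < (1 - α) * n) →
      ∀ σ : Equiv.Perm (Fin n), (pathWeight n w σ : ℝ) < (1 - α) * n) := by
  have hpt : ∀ f : Fin n → Fin n, pathWeight n w f ≤ tourWeight n w f := by
    intro f
    apply Finset.sum_le_sum
    intro i _
    split_ifs <;> simp
  constructor
  · rintro ⟨σ, hσ⟩
    refine ⟨σ, ?_⟩
    have hall : ∀ i : Fin n, w (σ i) (σ (i + 1)) = 1 := by
      by_contra h
      push_neg at h
      obtain ⟨i, hi⟩ := h
      have hlt : tourWeight n w σ < ∑ _i : Fin n, 1 := by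
        apply Finset.sum_lt_sum (fun j _ => hw _ _)
        exact ⟨i, Finset.mem_univ i, lt_of_le_of_ne (hw _ _) hi⟩
      simp [hσ] at hlt
    have hn : 0 < n := Nat.pos_of_ne_zero (NeZero.ne n)
    have key : pathWeight n w σ + 1 = n := by
      have h2 : (∑ i : Fin n, if (i : ℕ) + 1 < n then 1 else 0)
          + (∑ i : Fin n, if (i : ℕ) + 1 < n then 0 else 1) = n := by
        rw [← Finset.sum_add_distrib]
        have : ∀ i : Fin n, ((if (i : ℕ) + 1 < n then (1:ℕ) else 0)
            + (if (i : ℕ) + 1 < n then 0 else 1)) = 1 := by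
          intro i; split_ifs <;> rfl
        rw [Finset.sum_congr rfl fun i _ => this i]
        simp
      have hp : pathWeight n w σ = ∑ i : Fin n, if (i : ℕ) + 1 < n then 1 else 0 := by
        unfold pathWeight
        exact Finset.sum_congr rfl fun i _ => by rw [hall i]
      have hs : (∑ i : Fin n, if (i : ℕ) + 1 < n then 0 else 1) = 1 := by
        have : ∀ i : Fin n, (if (i : ℕ) + 1 < n then (0:ℕ) else 1)
            = if i = ⟨n - 1, by omega⟩ then 1 else 0 := by
          intro i
          have := i.isLt
          by_cases h : (i : ℕ) + 1 < n
          · rw [if_pos h, if_neg]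
            intro he
            rw [he] at h
            simp only [Fin.val_mk] at h
            omega
          · rw [if_neg h, if_pos]
            apply Fin.ext
            simp
            omega
        rw [Finset.sum_congr rfl fun i _ => this i]
        simp
      rw [hs] at h2
      rw [hp]
      exact h2
    omega
  · intro α h σ
    calc (pathWeight n w σ : ℝ) ≤ (tourWeight n w σ : ℝ) := by exact_mod_cast hpt σ
      _ < (1 - α) * n := h σ
end

section
/- Let ℓ ≥ 1 and let S be a set of strings each of length exactly ℓ (so no string in S is a substring of another). Then a fixed character position in any string u can be covered by at most ℓ occurrences of length-ℓ substrings, and hence if a maximal greedy collection of q strings from S is realized as a prefix of a permutation of t, the optimal solution has size at most q·ℓ², i.e., greedy is an ℓ²-approximation. -/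
/-!
Fix an arrangement `l` of `t` containing every string of `T` as an infix. A string `s ∈ T` outside
`L` does not fit after the greedy strings, so some letter `a` occurs in `s` more often than the
budget `c - g` that `L` leaves, where `c` and `g` count `a` in `t` and in `L`; a string of `L` may
use any of its letters. Charge every `s ∈ T` to such a letter. The letter `a` receives at most `g`
charges from (distinct) strings of `L`, each other charge brings at least `c - g + 1` copies of
`a`, and since a position of `l` lies in at most `ℓ` windows of length `ℓ`, all charged strings
together hold at most `ℓ c` copies of `a`. Hence `a` is charged at most `ℓ g` times, and summing
over the letters gives `|T| ≤ ℓ |L.flatten| = ℓ² |L|`.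
-/

open Finset

namespace GreedyString

theorem exists_take_drop_eq_of_infix {α : Type*} {s l : List α} (h : s <:+: l) :
    ∃ i, (l.drop i).take s.length = s := by
  obtain ⟨u, v, rfl⟩ := h
  exact ⟨u.length, by simp⟩

variable {α : Type*} [DecidableEq α]

theorem card_filter_covering_le (I : Finset ℕ) (p ℓ : ℕ) : #{i ∈ I | i ≤ p ∧ p < i + ℓ} ≤ ℓ := by
  calc #{i ∈ I | i ≤ p ∧ p < i + ℓ} ≤ #(Ico (p + 1 - ℓ) (p + 1)) :=
        card_le_card fun i hi => by simp only [mem_filter, mem_Ico] at hi ⊢; omega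
    _ ≤ ℓ := by simp only [Nat.card_Ico]; omega

def positions (l : List α) (a : α) : Finset ℕ := {j ∈ range l.length | l[j]? = some a}

theorem card_positions (l : List α) (a : α) : #(positions l a) = l.count a := by
  induction l with
  | nil => simp [positions]
  | cons x xs ih =>
    simp only [positions, card_filter] at ih ⊢
    rw [List.length_cons, sum_range_succ', List.count_cons, ← ih]
    by_cases hx : x = a <;> simp [hx]

theorem count_take_drop (l : List α) (a : α) (i n : ℕ) :
    ((l.drop i).take n).count a = #{j ∈ positions l a | i ≤ j ∧ j < i + n} := by
  rw [← card_positions]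
  refine card_nbij' (i + ·) (· - i) ?_ ?_ ?_ ?_ <;> intro k hk <;>
    simp only [positions, coe_filter, mem_filter, mem_range, List.length_take, List.length_drop,
      List.getElem?_take, List.getElem?_drop, Set.mem_ofPred_eq] at hk ⊢
  · obtain ⟨hk, ha⟩ := hk
    rw [if_pos (by omega)] at ha
    exact ⟨⟨by omega, ha⟩, by omega, by omega⟩
  · obtain ⟨⟨hkl, ha⟩, hik, hkn⟩ := hk
    rw [if_pos (by omega), Nat.add_sub_cancel' hik]
    exact ⟨by omega, ha⟩
  · omega
  · omega

theorem sum_count_take_drop_le (l : List α) (a : α) (ℓ : ℕ) (I : Finset ℕ) :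
    ∑ i ∈ I, ((l.drop i).take ℓ).count a ≤ ℓ * l.count a := by
  simp only [count_take_drop]
  have := sum_card_bipartiteAbove_eq_sum_card_bipartiteBelow (s := I) (t := positions l a)
    (r := fun i j => i ≤ j ∧ j < i + ℓ)
  simp only [bipartiteAbove, bipartiteBelow] at this
  rw [this, ← card_positions, mul_comm, ← smul_eq_mul, ← sum_const]
  exact sum_le_sum fun j _ => card_filter_covering_le I j ℓ

theorem sum_count_le_of_infix (l : List α) (a : α) {ℓ : ℕ} {T : Finset (List α)}
    (hlen : ∀ s ∈ T, s.length = ℓ) (hinf : ∀ s ∈ T, s <:+: l) :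
    ∑ s ∈ T, s.count a ≤ ℓ * l.count a := by
  have hstart : ∀ s ∈ T, ∃ i, (l.drop i).take ℓ = s := fun s hs => by
    rw [← hlen s hs]
    exact exists_take_drop_eq_of_infix (hinf s hs)
  choose! start hstart using hstart
  calc ∑ s ∈ T, s.count a = ∑ i ∈ T.image start, ((l.drop i).take ℓ).count a := by
        rw [sum_image fun s hs s' hs' h => by rw [← hstart s hs, ← hstart s' hs', h]]
        exact sum_congr rfl fun s hs => by rw [hstart s hs]
    _ ≤ ℓ * l.count a := sum_count_take_drop_le l a ℓ _

theorem sum_count_le_length (l : List α) (A : Finset α) : ∑ a ∈ A, l.count a ≤ l.length :=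
  (sum_le_sum_of_ne_zero fun _ _ ha =>
    List.mem_toFinset.2 (List.count_pos_iff.1 (Nat.pos_of_ne_zero ha))).trans_eq
      (List.sum_toFinset_count_eq_length l)

theorem exists_mem_count_lt_of_not_le {x s : List α} {t : Multiset α} (hx : ↑x ≤ t)
    (h : ¬ (↑(x ++ s) : Multiset α) ≤ t) : ∃ a ∈ s, t.count a < x.count a + s.count a := by
  rw [Multiset.le_iff_count] at h
  push Not at h
  obtain ⟨a, ha⟩ := h
  have hxa := Multiset.count_le_of_le a hx
  simp only [Multiset.coe_count, List.count_append] at ha hxa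
  exact ⟨a, List.count_pos_iff.1 (by omega), ha⟩

-- `k` strings outside `L` each hold at least `c + 1 - g` copies of a letter and `m ≤ g` strings
-- of `L` hold at least one, all within a total of `ℓ c` copies.
theorem add_le_mul_of_mul_succ_add_le {ℓ c g k m : ℕ} (hℓ : 1 ≤ ℓ) (hgc : g ≤ c) (hmg : m ≤ g)
    (hg : k ≠ 0 → 1 ≤ g) (h : k * (c + 1) + m ≤ ℓ * c + k * g) : k + m ≤ ℓ * g := by
  rcases Nat.eq_zero_or_pos k with rfl | hk
  · simpa using hmg.trans (Nat.le_mul_of_pos_left g hℓ)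
  have hg := hg hk.ne'
  by_contra! hcon
  obtain ⟨d, rfl⟩ := Nat.exists_eq_add_of_le hgc
  have hℓk : ℓ ≤ k := by nlinarith
  nlinarith [Nat.mul_le_mul_right d hℓk]

section Charging

variable {ℓ : ℕ} {l : List α} {L : List (List α)} {T : Finset (List α)} {w : List α → α}

theorem card_witness_fiber_le (hℓ : 1 ≤ ℓ) (hLnd : L.Nodup)
    (hLl : ∀ a, L.flatten.count a ≤ l.count a)
    (hlen : ∀ s ∈ T, s.length = ℓ) (hinf : ∀ s ∈ T, s <:+: l) (hw_mem : ∀ s ∈ T, w s ∈ s)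
    (hw_short : ∀ s ∈ T, s ∉ L → l.count (w s) < L.flatten.count (w s) + s.count (w s))
    (a : α) : #{s ∈ T | w s = a} ≤ ℓ * L.flatten.count a := by
  set Ta := {s ∈ T | w s = a}
  have hTa : ∀ s ∈ Ta, s ∈ T ∧ w s = a := fun s hs => mem_filter.1 hs
  set M := {s ∈ Ta | s ∈ L}
  set K := {s ∈ Ta | s ∉ L}
  have hsum : ∑ s ∈ M, s.count a + ∑ s ∈ K, s.count a ≤ ℓ * l.count a := by
    rw [sum_filter_add_sum_filter_not]
    exact sum_count_le_of_infix l a (fun s hs => hlen s (hTa s hs).1)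
      fun s hs => hinf s (hTa s hs).1
  have hM : #M ≤ ∑ s ∈ M, s.count a := by
    simpa using card_nsmul_le_sum M (fun s => s.count a) 1 fun s hs => by
      obtain ⟨hsT, rfl⟩ := hTa s (mem_filter.1 hs).1
      exact List.count_pos_iff.2 (hw_mem s hsT)
  have hMg : ∑ s ∈ M, s.count a ≤ L.flatten.count a :=
    calc ∑ s ∈ M, s.count a ≤ ∑ s ∈ L.toFinset, s.count a :=
          sum_le_sum_of_subset fun s hs => List.mem_toFinset.2 (mem_filter.1 hs).2
      _ = L.flatten.count a := by rw [List.sum_toFinset _ hLnd, List.count_flatten]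
  have hK : ∀ s ∈ K, l.count a + 1 ≤ L.flatten.count a + s.count a := fun s hs => by
    obtain ⟨hsTa, hsL⟩ := mem_filter.1 hs
    obtain ⟨hsT, rfl⟩ := hTa s hsTa
    exact hw_short s hsT hsL
  have hKsum : #K * (l.count a + 1) ≤ #K * L.flatten.count a + ∑ s ∈ K, s.count a := by
    simpa [sum_add_distrib, mul_comm] using sum_le_sum hK
  have hKg : #K ≠ 0 → 1 ≤ L.flatten.count a := fun hK0 => by
    obtain ⟨s, hs⟩ := card_pos.1 (Nat.pos_of_ne_zero hK0)
    have := ((hinf s (hTa s (mem_filter.1 hs).1).1).sublist).count_le a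
    have := hK s hs
    omega
  rw [← card_filter_add_card_filter_not (fun s => s ∈ L), add_comm]
  exact add_le_mul_of_mul_succ_add_le hℓ (hLl a) (hM.trans hMg) hKg (by nlinarith)

theorem card_le_mul_length_flatten (hℓ : 1 ≤ ℓ) (hLnd : L.Nodup)
    (hLl : ∀ a, L.flatten.count a ≤ l.count a)
    (hlen : ∀ s ∈ T, s.length = ℓ) (hinf : ∀ s ∈ T, s <:+: l) (hw_mem : ∀ s ∈ T, w s ∈ s)
    (hw_short : ∀ s ∈ T, s ∉ L → l.count (w s) < L.flatten.count (w s) + s.count (w s)) :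
    #T ≤ ℓ * L.flatten.length :=
  calc #T = ∑ a ∈ T.image w, #{s ∈ T | w s = a} := card_eq_sum_card_image w T
    _ ≤ ∑ a ∈ T.image w, ℓ * L.flatten.count a :=
        sum_le_sum fun a _ => card_witness_fiber_le hℓ hLnd hLl hlen hinf hw_mem hw_short a
    _ = ℓ * ∑ a ∈ T.image w, L.flatten.count a := (mul_sum _ _ _).symm
    _ ≤ ℓ * L.flatten.length := Nat.mul_le_mul_left ℓ (sum_count_le_length _ _)

end Charging

end GreedyString

open GreedyString

/-- Greedy analysis when all strings of `S` have length exactly `ℓ` (so none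
is a substring of another): a fixed position `p` is covered by at most `ℓ`
occurrences of length-`ℓ` substrings, and if a maximal collection `L` of `q`
strings of `S` is realized as a prefix of a permutation of `t`, then any
subset `T ⊆ S` realizable as substrings of a single permutation of `t`
satisfies `|T| ≤ q·ℓ²`, i.e. greedy is an `ℓ²`-approximation. -/
theorem stmt_10 {α : Type*} [DecidableEq α] (ℓ : ℕ) (hℓ : 1 ≤ ℓ)
    (S : Finset (List α)) (hS : ∀ s ∈ S, s.length = ℓ) (t : Multiset α)
    (L : List (List α)) (hLS : ∀ s ∈ L, s ∈ S) (hLnd : L.Nodup)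
    (hLpref : (↑L.flatten : Multiset α) ≤ t)
    (hLmax : ∀ s ∈ S, s ∉ L → ¬ ((↑(L.flatten ++ s) : Multiset α) ≤ t)) :
    (∀ p : ℕ,
      ((Finset.range (p + 1)).filter
        (fun i => i ≤ p ∧ p ≤ i + ℓ - 1)).card ≤ ℓ) ∧
    (∀ T ⊆ S, (∃ l : List α, (↑l : Multiset α) = t ∧ ∀ s ∈ T, s <:+: l) →
      T.card ≤ L.length * ℓ ^ 2) := by
  refine ⟨fun p => ?_, fun T hTS ⟨l, hl, hinf⟩ => ?_⟩
  · rw [filter_congr fun i _ => show i ≤ p ∧ p ≤ i + ℓ - 1 ↔ i ≤ p ∧ p < i + ℓ by omega]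
    exact card_filter_covering_le _ p ℓ
  subst hl
  have hLl : ∀ a, L.flatten.count a ≤ l.count a := fun a => by
    simpa using Multiset.count_le_of_le a hLpref
  have hwit : ∀ s ∈ T, ∃ a ∈ s, s ∉ L → l.count a < L.flatten.count a + s.count a := by
    intro s hs
    by_cases hsL : s ∈ L
    · obtain ⟨a, ha⟩ := List.exists_mem_of_length_pos (by rw [hS s (hTS hs)]; omega)
      exact ⟨a, ha, absurd hsL⟩
    · obtain ⟨a, has, ha⟩ := exists_mem_count_lt_of_not_le hLpref (hLmax s (hTS hs) hsL)
      exact ⟨a, has, fun _ => by simpa using ha⟩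
  rcases T.eq_empty_or_nonempty with rfl | ⟨s₀, hs₀⟩
  · simp
  have : Nonempty α := ⟨(hwit s₀ hs₀).choose⟩
  choose! w hw_mem hw_short using hwit
  have hlen : L.flatten.length = L.length * ℓ := by
    rw [List.length_flatten, List.sum_eq_card_nsmul _ ℓ (by simpa using fun s hs => hS s (hLS s hs))]
    simp
  calc T.card ≤ ℓ * L.flatten.length :=
        card_le_mul_length_flatten hℓ hLnd hLl (fun s hs => hS s (hTS hs)) hinf hw_mem hw_short
    _ = L.length * ℓ ^ 2 := by rw [hlen]; ring
end

section
/- Let t be a multiset over alphabet Σ, P' the set of characters occurring exactly once in t, P = Σ \ P', and let S be a set of length-2 strings. Let F be any ordering of P (one copy each). For any string ab ∈ S with a ∈ P or b ∈ P, and any ordering F' of P', the string ab is a subsequence of F · F' · F. -/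
/-- Let `P'` be the characters occurring exactly once in the multiset `t` and
`P` those occurring at least twice, and let `F`, `F'` be orderings of `P`,
`P'` respectively. If `a` and `b` are characters of `t` and at least one of
them lies in `P`, then `ab` is a subsequence of `F · F' · F`. -/
theorem stmt_13 {α : Type*} [DecidableEq α] (t : Multiset α)
    (F F' : List α) (hF : F.Nodup) (hF' : F'.Nodup)
    (hFmem : ∀ x, x ∈ F ↔ 2 ≤ t.count x)
    (hF'mem : ∀ x, x ∈ F' ↔ t.count x = 1)
    (a b : α) (ha : 1 ≤ t.count a) (hb : 1 ≤ t.count b)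
    (hP : 2 ≤ t.count a ∨ 2 ≤ t.count b) :
    List.Sublist [a, b] (F ++ F' ++ F) := by
  rw [List.append_assoc]
  by_cases h : 2 ≤ t.count a
  · have haF : a ∈ F := (hFmem a).2 h
    have hbF : b ∈ F' ++ F := by
      by_cases h2 : 2 ≤ t.count b
      · exact List.mem_append_right _ ((hFmem b).2 h2)
      · exact List.mem_append_left _ ((hF'mem b).2 (le_antisymm (by omega) hb))
    exact ((List.singleton_sublist.2 haF).append (List.singleton_sublist.2 hbF))
  · have haF' : a ∈ F' := (hF'mem a).2 (le_antisymm (by omega) ha)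
    have hbF : b ∈ F := (hFmem b).2 (hP.resolve_left h)
    exact ((List.singleton_sublist.2 haF').append (List.singleton_sublist.2 hbF)).trans
      (List.sublist_append_right F _)
end

section
/- Suppose there is a polynomial-time algorithm solving RCSstr over the binary alphabet {0,1} exactly. Then for any shortest common superstring instance S of n binary strings each of length at most ℓ, the length of the shortest common superstring equals the minimum value of i+j over all pairs (i,j) with i+j ≤ nℓ such that the RCSstr instance (S, 0^i 1^j) is complete (all strings of S are substrings of an optimal permutation). In particular, a string x with i zeros and j ones is a common superstring of all strings in S if and only if the RCSstr instance (S, 0^i 1^j) is complete. -/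
/-- The RCSstr instance `(S, 0^i 1^j)` over the binary alphabet is *complete*
if some permutation of the multiset with `i` zeros and `j` ones contains every
string of `S` as a substring. -/
def RCSComplete (S : Finset (List Bool)) (i j : ℕ) : Prop :=
  ∃ l : List Bool, l.count false = i ∧ l.count true = j ∧
    ∀ s ∈ S, s <:+: l

lemma count_false_add_count_true (l : List Bool) :
    l.count false + l.count true = l.length := by
  induction l with
  | nil => simp
  | cons a t ih => cases a <;> simp [List.count_cons] <;> omega

lemma infix_flatten_of_mem {α : Type*} {s : List α} {L : List (List α)}
    (h : s ∈ L) : s <:+: L.flatten := by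
  induction L with
  | nil => simp at h
  | cons a t ih =>
    rw [List.flatten_cons]
    rcases List.mem_cons.mp h with rfl | h
    · exact (List.prefix_append s t.flatten).isInfix
    · exact (ih h).trans (List.suffix_append a t.flatten).isInfix

/-- Reduction of binary shortest common superstring to binary RCSstr: a string
`x` with `i` zeros and `j` ones is a common superstring of all strings of `S`
iff the instance `(S, 0^i 1^j)` is complete; and the length of the shortest
common superstring of the `n = |S|` strings (each of length at most `ℓ`)
equals the minimum of `i + j` over pairs with `i + j ≤ nℓ` whose instance
`(S, 0^i 1^j)` is complete. -/
theorem stmt_16 (ℓ : ℕ) (S : Finset (List Bool)) (hS : S.Nonempty)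
    (hℓ : ∀ s ∈ S, s.length ≤ ℓ) :
    (∀ i j : ℕ,
      (∃ x : List Bool, x.count false = i ∧ x.count true = j ∧
        ∀ s ∈ S, s <:+: x) ↔ RCSComplete S i j) ∧
    sInf {m : ℕ | ∃ x : List Bool, x.length = m ∧ ∀ s ∈ S, s <:+: x} =
      sInf {m : ℕ | ∃ i j : ℕ, m = i + j ∧ i + j ≤ S.card * ℓ ∧
        RCSComplete S i j} := by
  constructor
  · intro i j; rfl
  · set A := {m : ℕ | ∃ x : List Bool, x.length = m ∧ ∀ s ∈ S, s <:+: x}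
    set B := {m : ℕ | ∃ i j : ℕ, m = i + j ∧ i + j ≤ S.card * ℓ ∧ RCSComplete S i j}
    -- concatenation witness
    set x₀ := (S.toList).flatten with hx₀
    have hx₀sup : ∀ s ∈ S, s <:+: x₀ := fun s hs =>
      infix_flatten_of_mem (by simpa using hs)
    have hx₀len : x₀.length ≤ S.card * ℓ := by
      rw [hx₀, List.length_flatten]
      have := List.sum_le_card_nsmul (S.toList.map List.length) ℓ (by
        intro a ha
        simp only [List.mem_map] at ha
        obtain ⟨s, hs, rfl⟩ := ha
        exact hℓ s (by simpa using hs))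
      simpa [smul_eq_mul] using this
    have hA : x₀.length ∈ A := ⟨x₀, rfl, hx₀sup⟩
    have hAne : A.Nonempty := ⟨_, hA⟩
    have hInfA : sInf A ∈ A := Nat.sInf_mem hAne
    obtain ⟨x, hxlen, hxsup⟩ := hInfA
    have hxle : x.length ≤ S.card * ℓ := by
      rw [hxlen]; exact le_trans (Nat.sInf_le hA) hx₀len
    have hInfAB : sInf A ∈ B := by
      refine ⟨x.count false, x.count true, ?_, ?_, x, rfl, rfl, hxsup⟩ <;>
        rw [count_false_add_count_true] <;> omega
    have hBsubA : B ⊆ A := by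
      rintro m ⟨i, j, rfl, -, l, hi, hj, hsup⟩
      exact ⟨l, by rw [← count_false_add_count_true, hi, hj], hsup⟩
    exact le_antisymm (le_csInf ⟨_, hInfAB⟩ fun m hm => Nat.sInf_le (hBsubA hm))
      (Nat.sInf_le hInfAB)
end

section
/- Let v_1, ..., v_n, v_1 be a closed tour in a complete directed graph whose arcs of weight 1 form the set S of length-2 strings (as strings v_i v_{i+1}), and suppose the tour has total weight k. Then either all n consecutive pairs (including the wrap-around pair) are in S, in which case the open path v_1...v_n realizes n−1 strings of S as substrings; or some consecutive pair v_i v_{i+1} is not in S, in which case the rotated path starting after that pair realizes exactly k strings of S as substrings. -/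
/-!
The open path `f 0, …, f (n-1)` sees every cyclic pair of the tour except the wrap-around pair
`(f (-1), f 0)`. Rotating the tour to start just after a pair outside `S` makes that wrap-around
pair the missing one, so nothing is lost, and cyclic counts are invariant under rotation.
-/

/-- Number of cyclic consecutive pairs of the tour `f 0, …, f (n-1), f 0`
that lie in `S`. -/
def cycCount (n : ℕ) [NeZero n] (S : Finset (Fin n × Fin n))
    (f : Fin n → Fin n) : ℕ :=
  (Finset.univ.filter (fun i : Fin n => (f i, f (i + 1)) ∈ S)).card

/-- Number of consecutive pairs of the open path `f 0, …, f (n-1)` that lie in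
`S`, i.e. the number of strings of `S` realized as substrings. -/
def pathCount (n : ℕ) [NeZero n] (S : Finset (Fin n × Fin n))
    (f : Fin n → Fin n) : ℕ :=
  (Finset.univ.filter
    (fun i : Fin n => (i : ℕ) + 1 < n ∧ (f i, f (i + 1)) ∈ S)).card

open Finset

lemma Fin.val_add_one_lt_iff_ne_neg_one {n : ℕ} [NeZero n] (i : Fin n) :
    (i : ℕ) + 1 < n ↔ i ≠ -1 := by
  obtain ⟨m, rfl⟩ := Nat.exists_eq_succ_of_ne_zero (NeZero.ne n)
  rw [Ne, Fin.ext_iff, Fin.coe_neg_one]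
  omega

section TourCounts

variable {n : ℕ} [NeZero n] (S : Finset (Fin n × Fin n)) (f : Fin n → Fin n)

lemma pathCount_eq_card_erase :
    pathCount n S f = #(({i | (f i, f (i + 1)) ∈ S} : Finset (Fin n)).erase (-1)) := by
  unfold pathCount
  congr 1
  ext i
  simp [Fin.val_add_one_lt_iff_ne_neg_one]

lemma cycCount_rotate (c : Fin n) : cycCount n S (fun j => f (c + j)) = cycCount n S f := by
  simp only [cycCount, card_filter, ← add_assoc]
  exact Equiv.sum_comp (Equiv.addLeft c) (fun i => if (f i, f (i + 1)) ∈ S then 1 else 0)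

lemma pathCount_of_forall_mem (h : ∀ i, (f i, f (i + 1)) ∈ S) : pathCount n S f = n - 1 := by
  rw [pathCount_eq_card_erase, filter_true_of_mem fun i _ => h i,
    card_erase_of_mem (mem_univ _), card_univ, Fintype.card_fin]

lemma pathCount_eq_cycCount_of_notMem (h : (f (-1), f 0) ∉ S) :
    pathCount n S f = cycCount n S f := by
  rw [pathCount_eq_card_erase, erase_eq_of_notMem (by simpa using h), cycCount]

end TourCounts

/-- Tour rotation: for a closed tour of weight `k` (its cyclic pairs in `S`
counted), either all `n` cyclic consecutive pairs are in `S` and the open path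
realizes `n − 1` strings of `S` as substrings, or some cyclic pair is not in
`S` and the rotation starting just after it realizes exactly `k` strings. -/
theorem stmt_17 (n : ℕ) [NeZero n] (S : Finset (Fin n × Fin n))
    (σ : Equiv.Perm (Fin n)) :
    ((∀ i : Fin n, (σ i, σ (i + 1)) ∈ S) ∧ pathCount n S σ = n - 1) ∨
    (∃ c : Fin n, (σ c, σ (c + 1)) ∉ S ∧
      pathCount n S (fun j => σ (c + 1 + j)) = cycCount n S σ) := by
  by_cases h : ∀ i : Fin n, (σ i, σ (i + 1)) ∈ S
  · exact Or.inl ⟨h, pathCount_of_forall_mem S σ h⟩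
  · push Not at h
    obtain ⟨c, hc⟩ := h
    refine Or.inr ⟨c, hc, ?_⟩
    rw [pathCount_eq_cycCount_of_notMem _ _ (by simpa using hc), cycCount_rotate]
end
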